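/- arXiv:2308.02859 — 2 statements merged into one kernel-verified Lean document; each statement's English description precedes it below -/
import Mathlib

section
/- Let N be a CCI-envelope of a CCI X of size k ≥ 4 with Y = E(N)\X, and let (J; X₁, X₂) be a hyperplane-partition of X (so J ⊆ Y, |J| = k−3, and J ∪ X₁, J ∪ X₂ are hyperplanes with X = X₁ ⊔ X₂). Suppose (J'; X₁', ..., X_m') is another hyperplane-partition, and {x₁} = X₁ ∩ X₁', {x₂} = X₂ ∩ X₂' are singleton blocks of the induced common refinement such that {x₁, x₂} is not contained in any X_j'. Then (J ∩ J') ∪ {x₁, x₂} is a hyperplane of N, and X\{x₁, x₂} is a CCI of N of size k−2. -/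
/-!
Write `r = r(N) = k - 1` and `W = J ∩ J'`. The complement `Y = E \ X` of the cocircuit `X`
is a hyperplane with `r - 1` elements, hence independent. The hyperplanes `J ∪ X₁` and
`J' ∪ X'_{j₁}` meet in the flat `W + x₁`, and likewise `W + x₂` is a flat. If `J = J'`,
then `J + x₁` would be the hyperplane `J ∪ X₁`, putting the basis `X - x₁` inside the
hyperplane `J ∪ X₂`; so `J ≠ J'`, `J ∪ J' = Y` and `|W| = r - 3`. Thus `H = W + x₁ + x₂`
is independent and its closure `G` is a hyperplane. Each of the flats `J ∪ X₁`,
`J' ∪ X'_{j₁}` (missing `x₂`) and `J ∪ X₂` (missing `x₁`) meets `G` in a flat of rank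
`r - 2` containing `W + x₁`, resp. `W + x₂`, hence in exactly that flat; as these three
hyperplanes cover `E`, `G = H`. Finally `X \ {x₁, x₂} = X ∩ (E \ H)`, and `E \ H` is a
cocircuit.
-/

open Set

namespace Matroid

variable {α : Type*}

/-- A circuit: a minimal dependent set. -/
def IsCircuit' (M : Matroid α) (C : Set α) : Prop :=
  C ⊆ M.E ∧ ¬ M.Indep C ∧ ∀ D, D ⊂ C → M.Indep D

/-- A cocircuit: a circuit of the dual matroid. -/
def IsCocircuit' (M : Matroid α) (C : Set α) : Prop :=
  M✶.IsCircuit' C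

/-- A circuit-cocircuit intersection (CCI). -/
def IsCCI (M : Matroid α) (X : Set α) : Prop :=
  ∃ C K, M.IsCircuit' C ∧ M.IsCocircuit' K ∧ X = C ∩ K

/-- A hyperplane: a maximal proper flat. -/
def IsHyperplane (M : Matroid α) (H : Set α) : Prop :=
  M.IsFlat H ∧ H ≠ M.E ∧ ∀ F, M.IsFlat F → H ⊂ F → F = M.E

/-- The rank of a set: the largest size of an independent subset. -/
noncomputable def rk (M : Matroid α) (A : Set α) : ℕ :=
  sSup {n | ∃ I, I ⊆ A ∧ M.Indep I ∧ I.ncard = n}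

/-- The rank of a matroid. -/
noncomputable def rank (M : Matroid α) : ℕ := M.rk M.E

/-- Deletion of a set from a matroid. -/
def del (M : Matroid α) (D : Set α) : Matroid α := M.restrict (M.E \ D)

/-- Contraction of a set in a matroid. -/
def con (M : Matroid α) (C : Set α) : Matroid α := (M✶.restrict (M.E \ C))✶

/-- `N` is a minor of `M` if it is obtained by a contraction followed by a deletion. -/
def IsMinor' (N M : Matroid α) : Prop := ∃ C D, N = (M.con C).del D

end Matroid

open Matroid

namespace Matroid

variable {α : Type*} {M : Matroid α} {B C F G H I K S W X : Set α} {b e : α}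

lemma isCircuit'_iff : M.IsCircuit' C ↔ M.IsCircuit C := by
  rw [isCircuit_iff_forall_ssubset, dep_iff, IsCircuit']
  tauto

lemma isCocircuit'_iff : M.IsCocircuit' K ↔ M.IsCocircuit K :=
  isCircuit'_iff

lemma IsFlat.inter (hF : M.IsFlat F) (hG : M.IsFlat G) : M.IsFlat (F ∩ G) := by
  rw [inter_eq_iInter]
  exact IsFlat.iInter (Bool.forall_bool.2 ⟨hG, hF⟩)

lemma Indep.insert_indep_of_subset_isFlat (hI : M.Indep I) (hF : M.IsFlat F) (hIF : I ⊆ F)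
    (he : e ∈ M.E \ F) : M.Indep (insert e I) :=
  (hI.insert_indep_iff_of_notMem fun h ↦ he.2 (hIF h)).2
    ⟨he.1, fun h ↦ he.2 (hF.closure.subset (M.closure_subset_closure hIF h))⟩

lemma IsHyperplane.spanning_of_ssubset (hH : M.IsHyperplane H) (hS : S ⊆ M.E) (hHS : H ⊂ S) :
    M.Spanning S :=
  (spanning_iff_closure_eq hS).2 <|
    hH.2.2 _ (M.isFlat_closure S) (hHS.trans_subset (M.subset_closure S hS))

lemma IsHyperplane.eq_of_subset {H' : Set α} (hH : M.IsHyperplane H) (hH' : M.IsHyperplane H')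
    (h : H ⊆ H') : H = H' :=
  by_contra fun hne ↦ hH'.2.1 (hH.2.2 _ hH'.1 (h.ssubset_of_ne hne))

lemma IsHyperplane.compl_isCocircuit (hH : M.IsHyperplane H) : M.IsCocircuit (M.E \ H) := by
  rw [isCocircuit_iff_minimal_compl_nonspanning, minimal_iff_forall_ssubset,
    sdiff_sdiff_cancel_left hH.1.subset_ground, spanning_iff_closure_eq hH.1.subset_ground,
    hH.1.closure]
  refine ⟨hH.2.1, fun T hT ↦ not_not.2 (hH.spanning_of_ssubset sdiff_subset ?_)⟩
  obtain ⟨e, ⟨heE, heH⟩, heT⟩ := exists_of_ssubset hT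
  exact ssubset_of_subset_of_ne (subset_sdiff.2 ⟨hH.1.subset_ground,
    disjoint_of_subset_right hT.subset disjoint_sdiff_right⟩) fun h ↦ heH (h ▸ ⟨heE, heT⟩)

lemma IsCocircuit.compl_isHyperplane (hK : M.IsCocircuit K) : M.IsHyperplane (M.E \ K) := by
  have hKE : K ⊆ M.E := hK.subset_ground
  rw [isCocircuit_iff_minimal_compl_nonspanning, minimal_iff_forall_ssubset] at hK
  obtain ⟨hnsp, hmin⟩ := hK
  have hsp : ∀ S ⊆ M.E, M.E \ K ⊂ S → M.Spanning S := by
    intro S hS hKS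
    obtain ⟨e, heS, heK⟩ := exists_of_ssubset hKS
    have hSK : M.E \ S ⊂ K :=
      (ssubset_iff_of_subset fun x hx ↦ by_contra fun hxK ↦ hx.2 (hKS.subset ⟨hx.1, hxK⟩)).2
        ⟨e, by_contra fun heK' ↦ heK ⟨hS heS, heK'⟩, fun he ↦ he.2 heS⟩
    simpa [sdiff_sdiff_cancel_left hS] using hmin hSK
  rw [spanning_iff_closure_eq sdiff_subset] at hnsp
  have hflat : M.IsFlat (M.E \ K) := by
    refine isFlat_iff_closure_eq.2 ((M.subset_closure _ sdiff_subset).antisymm' ?_)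
    by_contra h
    have hcl := (hsp _ (M.closure_subset_ground _)
      ((M.subset_closure _ sdiff_subset).ssubset_of_ne fun h' ↦ h h'.ge)).closure_eq
    exact hnsp (by rwa [closure_closure] at hcl)
  exact ⟨hflat, fun h ↦ hnsp (h ▸ hflat.closure.trans h), fun F hF hKF ↦ by
    rw [← hF.closure, (hsp F hF.subset_ground hKF).closure_eq]⟩

lemma IsHyperplane.isFlat_insert_inter {J J' A B : Set α} {x : α} (hH : M.IsHyperplane (J ∪ A))
    (hH' : M.IsHyperplane (J' ∪ B)) (hJB : Disjoint J B) (hAJ' : Disjoint A J')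
    (hx : A ∩ B = {x}) : M.IsFlat (insert x (J ∩ J')) := by
  have hF := hH.1.inter hH'.1
  rwa [union_inter_distrib_right, inter_union_distrib_left, inter_union_distrib_left,
    hJB.inter_eq, hAJ'.inter_eq, hx, union_empty, empty_union, union_singleton] at hF

lemma IsHyperplane.isCCI_sdiff (hH : M.IsHyperplane H) (hC : M.IsCircuit' C) :
    M.IsCCI (C \ H) :=
  ⟨C, M.E \ H, hC, isCocircuit'_iff.2 hH.compl_isCocircuit, by
    rw [← inter_sdiff_assoc, inter_eq_left.2 hC.1]⟩

section Finite

variable [M.Finite]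

lemma IsBase.ncard_eq_rank (hB : M.IsBase B) : B.ncard = M.rank := by
  rw [rank, rk, eq_comm]
  refine IsGreatest.csSup_eq ⟨⟨B, hB.subset_ground, hB.indep, rfl⟩, ?_⟩
  rintro _ ⟨I, -, hI, rfl⟩
  obtain ⟨B', hB', hIB'⟩ := hI.exists_isBase_superset
  exact (ncard_le_ncard hIB' hB'.finite).trans (hB'.ncard_eq_ncard_of_isBase hB).le

lemma Indep.isBase_of_rank_le_ncard (hI : M.Indep I) (h : M.rank ≤ I.ncard) : M.IsBase I := by
  obtain ⟨B, hB, hIB⟩ := hI.exists_isBase_superset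
  rwa [eq_of_subset_of_ncard_le hIB (hB.ncard_eq_rank ▸ h) hB.finite]

lemma Indep.ncard_lt_rank_of_subset_isFlat (hI : M.Indep I) (hF : M.IsFlat F) (hFE : F ≠ M.E)
    (hIF : I ⊆ F) : I.ncard < M.rank := by
  refine lt_of_not_ge fun h ↦ hFE (hF.subset_ground.antisymm ?_)
  rw [← (hI.isBase_of_rank_le_ncard h).closure_eq, ← hF.closure]
  exact M.closure_subset_closure hIF

lemma Indep.isHyperplane_closure (hI : M.Indep I) (hr : I.ncard + 1 = M.rank) :
    M.IsHyperplane (M.closure I) := by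
  refine ⟨M.isFlat_closure I, fun h ↦ ?_, fun F hF hIF ↦ ?_⟩
  · have := (hI.isBase_of_ground_subset_closure h.ge).ncard_eq_rank
    omega
  obtain ⟨e, heF, heI⟩ := exists_of_ssubset hIF
  have hIcl := M.subset_closure I hI.subset_ground
  have hB : M.IsBase (insert e I) := by
    refine (hI.insert_indep_of_subset_isFlat (M.isFlat_closure I) hIcl
      ⟨hF.subset_ground heF, heI⟩).isBase_of_rank_le_ncard ?_
    rw [ncard_insert_of_notMem (fun h ↦ heI (hIcl h)) hI.finite]
    omega
  refine hF.subset_ground.antisymm ?_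
  rw [← hB.closure_eq, ← hF.closure]
  exact M.closure_subset_closure (insert_subset heF (hIcl.trans hIF.subset))

lemma IsHyperplane.indep_of_ncard_add_one_eq_rank (hH : M.IsHyperplane H)
    (hr : H.ncard + 1 = M.rank) : M.Indep H := by
  obtain ⟨I, hI⟩ := M.exists_isBasis H hH.1.subset_ground
  obtain ⟨e, heE, heH⟩ := exists_of_ssubset (hH.1.subset_ground.ssubset_of_ne hH.2.1)
  have hclI : M.closure I = H := hI.closure_eq_closure.trans hH.1.closure
  have heI : e ∉ I := fun h ↦ heH (hI.subset h)
  have hB : M.IsBase (insert e I) := by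
    refine ((hI.indep.insert_indep_iff_of_notMem heI).2
      ⟨heE, hclI ▸ heH⟩).isBase_of_ground_subset_closure ?_
    rw [closure_insert_congr_right (hclI.trans hH.1.closure.symm)]
    exact (hH.spanning_of_ssubset (insert_subset heE hH.1.subset_ground)
      (ssubset_insert heH)).closure_eq.ge
  have hcard := hB.ncard_eq_rank
  rw [ncard_insert_of_notMem heI hI.indep.finite] at hcard
  rw [← eq_of_subset_of_ncard_le hI.subset (by omega) (M.set_finite H hH.1.subset_ground)]
  exact hI.indep

/-- A basis `I ⊇ W` of `G ∩ K` stays independent in the proper flat `G` after adding `b`,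
so `|I| ≤ r(M) - 2 = |W|`. -/
lemma Indep.inter_subset_closure (hW : M.Indep W) (hr : W.ncard + 2 = M.rank)
    (hG : M.IsFlat G) (hGE : G ≠ M.E) (hWG : W ⊆ G) (hbG : b ∈ G)
    (hK : M.IsFlat K) (hWK : W ⊆ K) (hbK : b ∉ K) : G ∩ K ⊆ M.closure W := by
  have hGK : G ∩ K ⊆ M.E := inter_subset_left.trans hG.subset_ground
  obtain ⟨I, hI, hWI⟩ := hW.subset_isBasis_of_subset (subset_inter hWG hWK) hGK
  have hbI : b ∉ I := fun h ↦ hbK (hI.subset h).2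
  have hlt := (hI.indep.insert_indep_of_subset_isFlat hK (hI.subset.trans inter_subset_right)
    ⟨hG.subset_ground hbG, hbK⟩).ncard_lt_rank_of_subset_isFlat hG hGE
    (insert_subset hbG (hI.subset.trans inter_subset_left))
  rw [ncard_insert_of_notMem hbI hI.indep.finite] at hlt
  rw [eq_of_subset_of_ncard_le hWI (by omega) hI.indep.finite, hI.closure_eq_closure]
  exact M.subset_closure _ hGK

lemma Indep.isHyperplane_insert_insert {a : α} (hI : M.Indep (insert b W)) (haE : a ∈ M.E)
    (hab : a ≠ b) (haW : a ∉ W) (hbW : b ∉ W) (hr : W.ncard + 3 = M.rank)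
    (ha : M.IsFlat (insert a W)) (hb : M.IsFlat (insert b W))
    (hcover : ∀ e ∈ M.E, (∃ K, M.IsFlat K ∧ insert a W ⊆ K ∧ b ∉ K ∧ e ∈ K) ∨
      (∃ K, M.IsFlat K ∧ insert b W ⊆ K ∧ a ∉ K ∧ e ∈ K)) :
    M.IsHyperplane (insert a (insert b W)) := by
  have haI : a ∉ insert b W := by simp [hab, haW]
  have hWfin : W.Finite := hI.finite.subset (subset_insert b W)
  have hH := hI.insert_indep_of_subset_isFlat hb subset_rfl ⟨haE, haI⟩
  have hG := hH.isHyperplane_closure (by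
    rw [ncard_insert_of_notMem haI (hWfin.insert b), ncard_insert_of_notMem hbW hWfin]
    omega)
  have hHG := M.subset_closure _ hH.subset_ground
  have haWH : insert a W ⊆ insert a (insert b W) := insert_subset_insert (subset_insert b W)
  suffices M.closure (insert a (insert b W)) ⊆ insert a (insert b W) by
    rwa [this.antisymm hHG] at hG
  intro e he
  rcases hcover e (M.closure_subset_ground _ he) with
    ⟨K, hK, hsub, hbK, heK⟩ | ⟨K, hK, hsub, haK, heK⟩
  · have hsd := (hH.subset haWH).inter_subset_closure
      (by rw [ncard_insert_of_notMem haW hWfin]; omega) hG.1 hG.2.1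
      (haWH.trans hHG) (hHG (by simp)) hK hsub hbK ⟨he, heK⟩
    exact haWH (ha.closure.subset hsd)
  · have hsd := hI.inter_subset_closure
      (by rw [ncard_insert_of_notMem hbW hWfin]; omega) hG.1 hG.2.1
      ((subset_insert a _).trans hHG) (hHG (mem_insert a _)) hK hsub haK ⟨he, heK⟩
    exact subset_insert a _ (hb.closure.subset hsd)

lemma IsCircuit.not_sdiff_singleton_subset (hX : M.IsCircuit X) (hXr : X.ncard = M.rank + 1)
    (hH : M.IsHyperplane H) (he : e ∈ X) : ¬ X \ {e} ⊆ H := fun h ↦ by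
  have hlt := (hX.sdiff_singleton_indep he).ncard_lt_rank_of_subset_isFlat hH.1 hH.2.1 h
  have := ncard_sdiff_singleton_add_one he (M.set_finite X hX.subset_ground)
  omega

/-- The flat `insert x J` would be the hyperplane `J ∪ X₁`, leaving the basis `X \ {x}`
inside the hyperplane `J ∪ X₂`. -/
lemma IsCircuit.not_isFlat_insert {J X₁ X₂ : Set α} {x : α} (hX : M.IsCircuit X)
    (hXr : X.ncard = M.rank + 1) (hJX : Disjoint J X) (hX₁₂ : X₁ ∪ X₂ = X)
    (hH₁ : M.IsHyperplane (J ∪ X₁)) (hH₂ : M.IsHyperplane (J ∪ X₂)) (hx : x ∈ X₁)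
    (hI : M.Indep (insert x J)) (hr : J.ncard + 2 = M.rank) : ¬ M.IsFlat (insert x J) := by
  intro hF
  have hxX : x ∈ X := hX₁₂ ▸ Or.inl hx
  have hxJ : x ∉ J := fun h ↦ hJX.notMem_of_mem_left h hxX
  have hH : M.IsHyperplane (insert x J) := by
    have := hI.isHyperplane_closure
      (by rw [ncard_insert_of_notMem hxJ (hI.finite.subset (subset_insert x J))]; omega)
    rwa [hF.closure] at this
  have hJX₁ := hH.eq_of_subset hH₁ (insert_subset (Or.inr hx) subset_union_left)
  refine hX.not_sdiff_singleton_subset hXr hH₂ hxX fun z ⟨hzX, hzx⟩ ↦ ?_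
  rcases (hX₁₂ ▸ hzX : z ∈ X₁ ∪ X₂) with hz | hz
  · rcases (hJX₁ ▸ Or.inr hz : z ∈ insert x J) with rfl | hzJ
    · exact absurd rfl hzx
    · exact absurd hzX (hJX.notMem_of_mem_left hzJ)
  · exact Or.inr hz

lemma IsCircuit.union_eq_compl_of_isFlat_insert {J J' X₁ X₂ : Set α} {x : α}
    (hX : M.IsCircuit X) (hXr : X.ncard = M.rank + 1) (hY : M.IsHyperplane (M.E \ X))
    (hYr : (M.E \ X).ncard + 1 = M.rank) (hJ : J ⊆ M.E \ X) (hJ' : J' ⊆ M.E \ X)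
    (hJr : J.ncard + 2 = M.rank) (hJ'r : J'.ncard + 2 = M.rank) (hX₁₂ : X₁ ∪ X₂ = X)
    (hH₁ : M.IsHyperplane (J ∪ X₁)) (hH₂ : M.IsHyperplane (J ∪ X₂)) (hx : x ∈ X₁)
    (hF : M.IsFlat (insert x (J ∩ J'))) : J ∪ J' = M.E \ X := by
  have hYfin := M.set_finite _ hY.1.subset_ground
  by_contra hne
  have hlt := ncard_lt_ncard ((union_subset hJ hJ').ssubset_of_ne hne) hYfin
  have hunion := ncard_union_add_ncard_inter J J' (hYfin.subset hJ) (hYfin.subset hJ')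
  have hJJ' : J ∩ J' = J :=
    eq_of_subset_of_ncard_le inter_subset_left (by omega) (hYfin.subset hJ)
  have hxX : x ∈ X := hX₁₂ ▸ Or.inl hx
  refine hX.not_isFlat_insert hXr (subset_sdiff.1 hJ).2 hX₁₂ hH₁ hH₂ hx ?_ hJr (hJJ' ▸ hF)
  exact ((hY.indep_of_ncard_add_one_eq_rank hYr).subset hJ).insert_indep_of_subset_isFlat
    hY.1 hJ ⟨hX.subset_ground hxX, fun h ↦ h.2 hxX⟩

end Finite

end Matroid

theorem stmt_6_general {α : Type*} (N : Matroid α) (k : ℕ) (hk : 4 ≤ k)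
    (hE : N.E.ncard = 2 * k - 2) (hr : N.rank = k - 1)
    (X : Set α) (hXcard : X.ncard = k)
    (hXc : N.IsCircuit' X) (hXcc : N.IsCocircuit' X)
    -- the hyperplane-partition (J; X₁, X₂)
    (J X₁ X₂ : Set α) (hJ : J ⊆ N.E \ X) (hJcard : J.ncard = k - 3)
    (hX₁₂ : X₁ ∪ X₂ = X) (hdisj : Disjoint X₁ X₂)
    (hH₁ : N.IsHyperplane (J ∪ X₁)) (hH₂ : N.IsHyperplane (J ∪ X₂))
    -- the hyperplane-partition (J'; X'_1, ..., X'_m)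
    (m : ℕ) (J' : Set α) (X' : Fin m → Set α)
    (hJ' : J' ⊆ N.E \ X) (hJ'card : J'.ncard = k - 3)
    (hX'union : (⋃ j, X' j) = X)
    (hH' : ∀ j, N.IsHyperplane (J' ∪ X' j))
    -- the singleton blocks of the induced refinement
    (x₁ x₂ : α) (j₁ j₂ : Fin m)
    (hx₁ : X₁ ∩ X' j₁ = {x₁}) (hx₂ : X₂ ∩ X' j₂ = {x₂})
    (hnot : ∀ j, ¬ ({x₁, x₂} : Set α) ⊆ X' j) :
    N.IsHyperplane ((J ∩ J') ∪ {x₁, x₂}) ∧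
      N.IsCCI (X \ {x₁, x₂}) ∧ (X \ {x₁, x₂}).ncard = k - 2 := by
  have : N.Finite := ⟨finite_of_ncard_pos (by omega)⟩
  have hXE : X ⊆ N.E := hXc.1
  have hY := (isCocircuit'_iff.1 hXcc).compl_isHyperplane
  have hYfin := N.set_finite _ hY.1.subset_ground
  have hYcard : (N.E \ X).ncard = k - 2 := by
    rw [ncard_sdiff hXE (N.set_finite X), hE, hXcard]; omega
  have hJX : Disjoint J X := (subset_sdiff.1 hJ).2
  have hJ'X : Disjoint J' X := (subset_sdiff.1 hJ').2
  have hX'X (j) : X' j ⊆ X := hX'union ▸ subset_iUnion X' j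
  have hx₁X₁ : x₁ ∈ X₁ ∩ X' j₁ := hx₁ ▸ rfl
  have hx₂X₂ : x₂ ∈ X₂ ∩ X' j₂ := hx₂ ▸ rfl
  have hx₁X : x₁ ∈ X := hX'X j₁ hx₁X₁.2
  have hx₂X : x₂ ∈ X := hX'X j₂ hx₂X₂.2
  have hF₁ := hH₁.isFlat_insert_inter (hH' j₁) (hJX.mono_right (hX'X j₁))
    (hJ'X.symm.mono_left (hX₁₂ ▸ subset_union_left)) hx₁
  have hF₂ := hH₂.isFlat_insert_inter (hH' j₂) (hJX.mono_right (hX'X j₂))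
    (hJ'X.symm.mono_left (hX₁₂ ▸ subset_union_right)) hx₂
  have hJJ' := (isCircuit'_iff.1 hXc).union_eq_compl_of_isFlat_insert (by omega) hY
    (by omega) hJ hJ' (by omega) (by omega) hX₁₂ hH₁ hH₂ hx₁X₁.1 hF₁
  have hWcard := ncard_union_add_ncard_inter J J' (hYfin.subset hJ) (hYfin.subset hJ')
  rw [hJJ'] at hWcard
  have hWY : J ∩ J' ⊆ N.E \ X := inter_subset_left.trans hJ
  have hind₂ := ((hY.indep_of_ncard_add_one_eq_rank (by omega)).subset hWY)
    |>.insert_indep_of_subset_isFlat hY.1 hWY ⟨hXE hx₂X, fun h ↦ h.2 hx₂X⟩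
  have hcov : N.E ⊆ (J ∪ X₁) ∪ (J' ∪ X' j₁) ∪ (J ∪ X₂) := by
    rw [← union_sdiff_cancel hXE, ← hJJ', ← hX₁₂]
    intro e
    simp only [mem_union]
    tauto
  have hH : N.IsHyperplane ((J ∩ J') ∪ {x₁, x₂}) := by
    rw [union_insert, union_singleton]
    refine hind₂.isHyperplane_insert_insert (hXE hx₁X) (hdisj.ne_of_mem hx₁X₁.1 hx₂X₂.1)
      (fun h ↦ (hWY h).2 hx₁X) (fun h ↦ (hWY h).2 hx₂X) (by omega) hF₁ hF₂
      fun e he ↦ ?_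
    rcases hcov he with (h | h) | h
    · exact .inl ⟨_, hH₁.1, insert_subset (.inr hx₁X₁.1) (inter_subset_left.trans
        subset_union_left), fun h ↦ h.elim (hJX.notMem_of_mem_left · hx₂X)
        (hdisj.notMem_of_mem_left · hx₂X₂.1), h⟩
    · exact .inl ⟨_, (hH' j₁).1, insert_subset (.inr hx₁X₁.2) (inter_subset_right.trans
        subset_union_left), fun h ↦ h.elim (hJ'X.notMem_of_mem_left · hx₂X)
        fun h ↦ hnot j₁ (pair_subset hx₁X₁.2 h), h⟩
    · exact .inr ⟨_, hH₂.1, insert_subset (.inr hx₂X₂.1) (inter_subset_left.trans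
        subset_union_left), fun h ↦ h.elim (hJX.notMem_of_mem_left · hx₁X)
        (hdisj.notMem_of_mem_right · hx₁X₁.1), h⟩
  refine ⟨hH, ?_, ?_⟩
  · have hCCI := hH.isCCI_sdiff hXc
    rwa [← sdiff_sdiff, (hJX.mono_left inter_subset_left).symm.sdiff_eq_left] at hCCI
  · rw [ncard_sdiff (pair_subset hx₁X hx₂X), hXcard,
      ncard_pair (hdisj.ne_of_mem hx₁X₁.1 hx₂X₂.1)]

theorem stmt_6 {α : Type*} (N : Matroid α) (k : ℕ) (hk : 4 ≤ k)
    (hE : N.E.ncard = 2 * k - 2) (hr : N.rank = k - 1) (hr' : N✶.rank = k - 1)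
    (X : Set α) (hXcard : X.ncard = k)
    (hXc : N.IsCircuit' X) (hXcc : N.IsCocircuit' X)
    -- the hyperplane-partition (J; X₁, X₂)
    (J X₁ X₂ : Set α) (hJ : J ⊆ N.E \ X) (hJcard : J.ncard = k - 3)
    (hX₁₂ : X₁ ∪ X₂ = X) (hdisj : Disjoint X₁ X₂)
    (hH₁ : N.IsHyperplane (J ∪ X₁)) (hH₂ : N.IsHyperplane (J ∪ X₂))
    -- the hyperplane-partition (J'; X'_1, ..., X'_m)
    (m : ℕ) (J' : Set α) (X' : Fin m → Set α)
    (hJ' : J' ⊆ N.E \ X) (hJ'card : J'.ncard = k - 3)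
    (hX'ne : ∀ j, (X' j).Nonempty)
    (hX'disj : ∀ i j, i ≠ j → Disjoint (X' i) (X' j))
    (hX'union : (⋃ j, X' j) = X)
    (hH' : ∀ j, N.IsHyperplane (J' ∪ X' j))
    -- the singleton blocks of the induced refinement
    (x₁ x₂ : α) (j₁ j₂ : Fin m)
    (hx₁ : X₁ ∩ X' j₁ = {x₁}) (hx₂ : X₂ ∩ X' j₂ = {x₂})
    (hnot : ∀ j, ¬ ({x₁, x₂} : Set α) ⊆ X' j) :
    N.IsHyperplane ((J ∩ J') ∪ {x₁, x₂}) ∧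
      N.IsCCI (X \ {x₁, x₂}) ∧ (X \ {x₁, x₂}).ncard = k - 2 :=
  stmt_6_general N k hk hE hr X hXcard hXc hXcc J X₁ X₂ hJ hJcard hX₁₂ hdisj hH₁ hH₂ m J' X' hJ'
    hJ'card hX'union hH' x₁ x₂ j₁ j₂ hx₁ hx₂ hnot
end

section
/- Let N be a CCI-envelope of a CCI X of size k ≥ 4 with Y = E(N)\X, and let (J; {x}, X₂, ..., X_m) be a hyperplane-partition with a singleton block {x}. Then for any cohyperplane-partition (J*; Z₁, ..., Z_p) with J* ≠ J, if x ∈ Z_i for some block Z_i with |Z_i| = 1, and the partition (J*; Z₁,...,Z_p) has at least two singleton blocks, then N has a CCI of size k−2. -/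
open Set

open Matroid

/-!
The complement of the hyperplane `J ∪ {x}` is a cocircuit, and for a singleton block `{z}` of the
cohyperplane-partition with `z ≠ x`, the complement of the cohyperplane `J* ∪ {z}` is a circuit.
Two distinct `(k-3)`-subsets `J ≠ J*` of the `(k-2)`-set `E \ X` cover it, so this circuit and
cocircuit meet exactly in `X \ {x, z}`, which has `k - 2` elements.
-/

namespace Matroid

variable {α : Type*} {M : Matroid α} {H : Set α} {e : α}

lemma IsHyperplane.not_spanning (hH : M.IsHyperplane H) : ¬ M.Spanning H := fun hsp ↦
  hH.2.1 (by rw [← hH.1.closure, hsp.closure_eq])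

lemma IsHyperplane.spanning_insert (hH : M.IsHyperplane H) (he : e ∈ M.E \ H) :
    M.Spanning (insert e H) := by
  have hground : insert e H ⊆ M.E := insert_subset he.1 hH.1.subset_ground
  rw [spanning_iff_closure_eq hground]
  refine hH.2.2 _ (M.isFlat_closure _) ⟨(subset_insert e H).trans (M.subset_closure _ hground),
    fun hsub ↦ he.2 (hsub (M.subset_closure _ hground (mem_insert e H)))⟩

lemma IsHyperplane.isCocircuit'_compl (hH : M.IsHyperplane H) : M.IsCocircuit' (M.E \ H) := by
  refine ⟨sdiff_subset, fun hcoindep ↦ hH.not_spanning ?_, fun D hD ↦ ?_⟩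
  · have := (coindep_iff_compl_spanning sdiff_subset).mp hcoindep
    rwa [sdiff_sdiff_cancel_left hH.1.subset_ground] at this
  · obtain ⟨e, he, heD⟩ := exists_of_ssubset hD
    refine (coindep_iff_compl_spanning (hD.subset.trans sdiff_subset)).mpr
      ((hH.spanning_insert he).superset (insert_subset ⟨he.1, heD⟩ fun a ha ↦ ?_) sdiff_subset)
    exact ⟨hH.1.subset_ground ha, fun haD ↦ (hD.subset haD).2 ha⟩

lemma IsHyperplane.isCircuit'_compl_of_dual (hH : M✶.IsHyperplane H) :
    M.IsCircuit' (M.E \ H) := by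
  simpa only [IsCocircuit', dual_dual, dual_ground] using hH.isCocircuit'_compl

end Matroid

lemma Set.union_eq_of_ne_of_ncard_add_one {α : Type*} {Y J J' : Set α} (hY : Y.Finite)
    (hJ : J ⊆ Y) (hJ' : J' ⊆ Y) (hcard : J.ncard = J'.ncard) (hY' : J'.ncard + 1 = Y.ncard)
    (hne : J ≠ J') : J ∪ J' = Y := by
  obtain ⟨a, haJ, haJ'⟩ : ∃ a ∈ J, a ∉ J' := not_subset.mp fun hsub ↦
    hne (eq_of_subset_of_ncard_le hsub hcard.ge (hY.subset hJ'))
  have hinsert : insert a J' = Y := eq_of_subset_of_ncard_le (insert_subset (hJ haJ) hJ')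
    (by rw [ncard_insert_of_notMem haJ' (hY.subset hJ'), hY']) hY
  exact (union_subset hJ hJ').antisymm
    (hinsert ▸ insert_subset (Or.inl haJ) subset_union_right)

lemma exists_singleton_ne_of_two_singletons {α ι : Type*} {Z : ι → Set α}
    (hdisj : ∀ i j, i ≠ j → Disjoint (Z i) (Z j))
    (htwo : ∃ i j, i ≠ j ∧ (Z i).ncard = 1 ∧ (Z j).ncard = 1) (x : α) :
    ∃ j z, z ≠ x ∧ Z j = {z} := by
  obtain ⟨i, j, hij, hi, hj⟩ := htwo
  obtain ⟨a, ha⟩ := ncard_eq_one.mp hi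
  obtain ⟨b, hb⟩ := ncard_eq_one.mp hj
  have hab : a ≠ b := (hdisj i j hij).ne_of_mem (ha ▸ rfl) (hb ▸ rfl)
  by_cases hax : a = x
  · exact ⟨j, b, hax ▸ hab.symm, hb⟩
  · exact ⟨i, a, hax, ha⟩

theorem stmt_18_general {α : Type*} (N : Matroid α) (k : ℕ) (hk : 4 ≤ k)
    (hE : N.E.ncard = 2 * k - 2)
    (X : Set α) (hXcard : X.ncard = k)
    (hXc : N.IsCircuit' X)
    -- the hyperplane-partition (J; {x}, X₂, ..., X_m): its singleton block
    (J : Set α) (x : α) (hJ : J ⊆ N.E \ X) (hJcard : J.ncard = k - 3)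
    (hx : x ∈ X) (hH : N.IsHyperplane (J ∪ {x}))
    -- the cohyperplane-partition (J*; Z₁, ..., Z_p)
    (p : ℕ) (Jst : Set α) (Z : Fin p → Set α)
    (hJst : Jst ⊆ N.E \ X) (hJstcard : Jst.ncard = k - 3)
    (hZdisj : ∀ i j, i ≠ j → Disjoint (Z i) (Z j))
    (hZunion : (⋃ i, Z i) = X)
    (hZco : ∀ i, N✶.IsHyperplane (Jst ∪ Z i))
    (hJne : Jst ≠ J)
    (htwo : ∃ i j, i ≠ j ∧ (Z i).ncard = 1 ∧ (Z j).ncard = 1) :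
    ∃ W : Set α, N.IsCCI W ∧ W.ncard = k - 2 := by
  have hEfin : N.E.Finite := finite_of_ncard_pos (by omega)
  have hXE : X ⊆ N.E := hXc.1
  have hYcard : (N.E \ X).ncard = k - 2 := by
    rw [ncard_sdiff hXE (hEfin.subset hXE), hE, hXcard]; omega
  have hcover : J ∪ Jst = N.E \ X := union_eq_of_ne_of_ncard_add_one hEfin.sdiff hJ hJst
    (by rw [hJcard, hJstcard]) (by omega) hJne.symm
  obtain ⟨j, z, hzx, hZj⟩ := exists_singleton_ne_of_two_singletons hZdisj htwo x
  have hzX : z ∈ X := hZunion ▸ mem_iUnion_of_mem j (hZj ▸ rfl)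
  have hinter : X \ {x, z} = (N.E \ (Jst ∪ {z})) ∩ (N.E \ (J ∪ {x})) := by
    rw [sdiff_inter_sdiff, show Jst ∪ {z} ∪ (J ∪ {x}) = (J ∪ Jst) ∪ {x, z} by
      ext; simp only [mem_union, mem_insert_iff, mem_singleton_iff]; tauto,
      hcover, ← sdiff_sdiff, sdiff_sdiff_cancel_left hXE]
  refine ⟨X \ {x, z}, ⟨_, _, (hZj ▸ hZco j).isCircuit'_compl_of_dual,
    hH.isCocircuit'_compl, hinter⟩, ?_⟩
  rw [ncard_sdiff (pair_subset hx hzX), hXcard, ncard_pair hzx.symm]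

theorem stmt_18 {α : Type*} (N : Matroid α) (k : ℕ) (hk : 4 ≤ k)
    (hE : N.E.ncard = 2 * k - 2) (hr : N.rank = k - 1) (hr' : N✶.rank = k - 1)
    (X : Set α) (hXcard : X.ncard = k)
    (hXc : N.IsCircuit' X) (hXcc : N.IsCocircuit' X)
    -- the hyperplane-partition (J; {x}, X₂, ..., X_m): its singleton block
    (J : Set α) (x : α) (hJ : J ⊆ N.E \ X) (hJcard : J.ncard = k - 3)
    (hx : x ∈ X) (hH : N.IsHyperplane (J ∪ {x}))
    -- the cohyperplane-partition (J*; Z₁, ..., Z_p)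
    (p : ℕ) (Jst : Set α) (Z : Fin p → Set α)
    (hJst : Jst ⊆ N.E \ X) (hJstcard : Jst.ncard = k - 3)
    (hZne : ∀ i, (Z i).Nonempty)
    (hZdisj : ∀ i j, i ≠ j → Disjoint (Z i) (Z j))
    (hZunion : (⋃ i, Z i) = X)
    (hZco : ∀ i, N✶.IsHyperplane (Jst ∪ Z i))
    (hJne : Jst ≠ J)
    (hxin : ∃ i, x ∈ Z i ∧ (Z i).ncard = 1)
    (htwo : ∃ i j, i ≠ j ∧ (Z i).ncard = 1 ∧ (Z j).ncard = 1) :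
    ∃ W : Set α, N.IsCCI W ∧ W.ncard = k - 2 :=
  stmt_18_general N k hk hE X hXcard hXc J x hJ hJcard hx hH p Jst Z hJst hJstcard hZdisj hZunion
    hZco hJne htwo
end
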